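/- Let f : X ⟶ A be a simplicial map whose target A is non-singular, let x be an n-simplex of X, and let ρ : [n] ⟶ [m] be an enforcer of x. Then there exists an m-simplex w of A such that f(x) = A.map ρ.op w; equivalently, the representing map Δ[n] ⟶ A of f(x) factors through the map Δ[n] ⟶ Δ[m] induced by ρ. -/

import Mathlib

open CategoryTheory CategoryTheory.Limits Simplicial SSet

/-- The `i`-th vertex of an `n`-simplex `x`, i.e. `x · εᵢ`, where `εᵢ : [0] ⟶ [n]`
sends `0` to `i`. -/
def SSet.vertex (X : SSet) {n : ℕ} (x : X _⦋n⦌) (i : Fin (n + 1)) : X _⦋0⦌ :=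
  X.map (SimplexCategory.const ⦋0⦌ ⦋n⦌ i).op x

/-- A simplex is degenerate if it is obtained from a simplex of strictly lower degree
by the action of a (necessarily non-identity) epimorphism of the simplex category. -/
def SSet.IsDegenerate (X : SSet) {n : ℕ} (x : X _⦋n⦌) : Prop :=
  ∃ (m : ℕ) (_ : m < n) (σ : (⦋n⦌ : SimplexCategory) ⟶ ⦋m⦌) (y : X _⦋m⦌),
    Epi σ ∧ x = X.map σ.op y

/-- A simplicial set is non-singular if the representing map of each of its
non-degenerate simplices is a monomorphism. -/
def SSet.NonSingular (X : SSet) : Prop :=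
  ∀ (n : ℕ) (x : X _⦋n⦌), ¬ X.IsDegenerate x → Mono ((SSet.yonedaEquiv (X := X) (n := ⦋n⦌)).symm x)

/-- The relation `≈ₓ` on `Fin (n + 1)`: `i ≈ₓ k` iff there exists `j` with
`i ≤ k`, `k ≤ j` and `x·εᵢ = x·εⱼ`. -/
def SSet.approxRel (X : SSet) {n : ℕ} (x : X _⦋n⦌) (i k : Fin (n + 1)) : Prop :=
  ∃ j, i ≤ k ∧ k ≤ j ∧ X.vertex x i = X.vertex x j

/-- The equivalence relation `Rₓ` generated by `≈ₓ`. -/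
def SSet.vertexRel (X : SSet) {n : ℕ} (x : X _⦋n⦌) : Fin (n + 1) → Fin (n + 1) → Prop :=
  Relation.EqvGen (X.approxRel x)

/-!
Write `f(x) = σ^* z` with `σ` an epimorphism and `z` non-degenerate (Eilenberg–Zilber).
Since `A` is non-singular, the vertices of `z` are pairwise distinct, so `σ` identifies
`i` and `j` whenever `x·εᵢ = x·εⱼ`. A monotone map identifying the ends of an interval
collapses the whole interval, hence `σ` is constant on the classes of `Rₓ`, which are
exactly the fibres of `ρ`. So `σ = ρ ≫ τ` for some `τ`, and `w = τ^* z` works.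
-/

lemma SimplexCategory.exists_comp_eq_of_epi {a b c : SimplexCategory} (ρ : a ⟶ b) [Epi ρ]
    (σ : a ⟶ c)
    (h : ∀ i j, ρ.toOrderHom i = ρ.toOrderHom j → σ.toOrderHom i = σ.toOrderHom j) :
    ∃ τ : b ⟶ c, ρ ≫ τ = σ := by
  have : IsSplitEpi ρ := isSplitEpi_of_epi ρ
  refine ⟨section_ ρ ≫ σ,
    SimplexCategory.Hom.ext _ _ (OrderHom.ext _ _ (funext fun i ↦ h _ _ ?_))⟩
  exact congrArg (fun g ↦ g.toOrderHom (ρ.toOrderHom i)) (IsSplitEpi.id ρ)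

namespace SSet

lemma isDegenerate_iff_mem_degenerate (X : SSet) {n : ℕ} (x : X _⦋n⦌) :
    X.IsDegenerate x ↔ x ∈ X.degenerate n := by
  rw [mem_degenerate_iff]
  simp only [IsDegenerate, Set.mem_range, exists_prop]
  grind

lemma NonSingular.nonsingular {X : SSet} (hX : X.NonSingular) : X.Nonsingular where
  mono := fun ⟨x, hx⟩ ↦ hX _ x ((isDegenerate_iff_mem_degenerate X x).not.2 hx)

lemma vertex_map (X : SSet) {n k : ℕ} (σ : (⦋n⦌ : SimplexCategory) ⟶ ⦋k⦌) (z : X _⦋k⦌)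
    (i : Fin (n + 1)) : X.vertex (X.map σ.op z) i = X.vertex z (σ.toOrderHom i) := by
  rw [vertex, vertex, ← Functor.map_comp_apply, ← op_comp, SimplexCategory.const_comp]

lemma vertex_app {X Y : SSet} (f : X ⟶ Y) {n : ℕ} (x : X _⦋n⦌) (i : Fin (n + 1)) :
    Y.vertex (f.app _ x) i = f.app _ (X.vertex x i) :=
  (NatTrans.naturality_apply f _ x).symm

lemma vertex_injective {X : SSet} [X.Nonsingular] {n : ℕ} {z : X _⦋n⦌}
    (hz : z ∈ X.nonDegenerate n) : Function.Injective (X.vertex z) := fun a b h ↦ by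
  simpa using congrArg (fun g ↦ g.toOrderHom 0) (Nonsingular.injective_map z hz h)

lemma vertexRel.eq_of_monotone {X : SSet} {n : ℕ} {x : X _⦋n⦌} {α : Type*} [PartialOrder α]
    {g : Fin (n + 1) → α} (hg : Monotone g)
    (hvert : ∀ i j, X.vertex x i = X.vertex x j → g i = g j)
    {i j : Fin (n + 1)} (hij : X.vertexRel x i j) : g i = g j := by
  induction hij with
  | rel i k hik =>
    obtain ⟨j, hik, hkj, hv⟩ := hik
    exact le_antisymm (hg hik) (hvert i j hv ▸ hg hkj)
  | refl => rfl
  | symm _ _ _ h => exact h.symm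
  | trans _ _ _ _ _ h₁ h₂ => exact h₁.trans h₂

end SSet

/-- If `f : X ⟶ A` has non-singular target and `ρ` is an enforcer of `x`, then
`f(x)` factors through `ρ`. -/
theorem factor_through_enforcer {X A : SSet} (f : X ⟶ A) (hA : A.NonSingular)
    {n m : ℕ} (x : X _⦋n⦌) (ρ : (⦋n⦌ : SimplexCategory) ⟶ ⦋m⦌) (hρ : Epi ρ)
    (henf : ∀ i j, ρ.toOrderHom i = ρ.toOrderHom j ↔ X.vertexRel x i j) :
    ∃ w : A _⦋m⦌, f.app (Opposite.op ⦋n⦌) x = A.map ρ.op w := by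
  have := hA.nonsingular
  obtain ⟨k, σ, -, ⟨z, hz⟩, hfx⟩ := A.exists_nonDegenerate (f.app _ x)
  have hσ : ∀ i j, X.vertexRel x i j → σ.toOrderHom i = σ.toOrderHom j := fun i j ↦
    vertexRel.eq_of_monotone σ.toOrderHom.monotone fun i j hv ↦ vertex_injective hz <| by
      rw [← vertex_map, ← vertex_map, ← hfx, vertex_app, vertex_app, hv]
  obtain ⟨τ, hτ⟩ :=
    SimplexCategory.exists_comp_eq_of_epi ρ σ fun i j h ↦ hσ i j ((henf i j).1 h)
  exact ⟨A.map τ.op z, by rw [hfx, ← hτ, op_comp, Functor.map_comp_apply]⟩
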